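/- arXiv:1905.11432 — 2 statements merged into one kernel-verified Lean document; each statement's English description precedes it below -/
import Mathlib

section
/- Let Λ′ be an A-lattice of finite rank in C and let λ ∈ C ∖ Λ′ satisfy |λ − μ| = max(|λ|, |μ|) for every nonzero μ ∈ Λ′. Then |e_{Λ′}(λ)| = |λ| · ∏_{0≠μ∈Λ′, |μ|≤|λ|} (|λ|/|μ|), where the product on the right has finitely many factors. In particular e_{Λ′}(λ) ≠ 0 and |e_{Λ′}(λ)| depends only on |λ|. -/
open Polynomial

set_option linter.unusedSectionVars false
set_option synthInstance.maxHeartbeats 400000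
set_option maxHeartbeats 1000000

noncomputable section

namespace DrinfeldPeriods

/-! ## The basic setting

`Fq` is the finite field with `q` elements, `Kinf Fq = F_q((T⁻¹))` is the field of formal
Laurent series in `T⁻¹` (realized as Laurent series in a variable `X` with `T := X⁻¹`),
and `C` is a complete algebraically closed nonarchimedean normed field whose norm extends
the absolute value of `K∞` normalized by `|T| = q`.  (The completed algebraic closure of
`K∞` is such a field.) -/

variable (Fq : Type*) [Field Fq] [Fintype Fq]

/-- `K∞ = F_q((T⁻¹))`, realized as the field of Laurent series over `F_q`; the element `T`
is the inverse of the canonical variable. -/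
abbrev Kinf := LaurentSeries Fq

/-- The element `T ∈ K∞`: the Laurent series `X⁻¹`, which has order `-1`,
i.e. absolute value `q`. -/
def Tinf : Kinf Fq := HahnSeries.single (-1 : ℤ) (1 : Fq)

variable (C : Type*) [NormedField C] [IsUltrametricDist C] [CompleteSpace C] [IsAlgClosed C]
  [Algebra (Kinf Fq) C]

/-- The norm of `C` restricts on `K∞` to the absolute value `|x| = q^{-v(x)}`
normalized by `|T| = q`. -/
def NormExtends : Prop :=
  ∀ x : Kinf Fq, x ≠ 0 → ‖algebraMap (Kinf Fq) C x‖ = (Fintype.card Fq : ℝ) ^ (-(x.order))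

/-- The image of `T` in `C`. -/
def TC : C := algebraMap (Kinf Fq) C (Tinf Fq)

/-- The canonical embedding `F_q → C`. -/
def FqC : Fq →+* C := (algebraMap (Kinf Fq) C).comp HahnSeries.C

/-- The action of `A = F_q[T]` on `C`: evaluation of polynomials at `T`. -/
def Amap : Polynomial Fq →+* C := eval₂RingHom (FqC Fq C) (TC Fq C)

/-- `Λ` is an `A`-lattice of rank `r` in `C`: an `A`-submodule of `C` which is discrete
(every bounded subset contains only finitely many lattice points) and free of rank `r`
over `A`. -/
structure IsLattice (Λ : Set C) (r : ℕ) : Prop where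
  zero_mem : (0 : C) ∈ Λ
  add_mem : ∀ x ∈ Λ, ∀ y ∈ Λ, x + y ∈ Λ
  smul_mem : ∀ (a : Polynomial Fq), ∀ x ∈ Λ, Amap Fq C a * x ∈ Λ
  discrete : ∀ B : ℝ, {x | x ∈ Λ ∧ ‖x‖ ≤ B}.Finite
  free : ∃ b : Fin r → C, (∀ i, b i ∈ Λ) ∧
    ∀ x ∈ Λ, ∃! a : Fin r → Polynomial Fq, x = ∑ i, Amap Fq C (a i) * b i

/-- `lam` is an `A`-basis of `Λ`. -/
def IsABasis {r : ℕ} (Λ : Set C) (lam : Fin r → C) : Prop :=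
  (∀ i, lam i ∈ Λ) ∧
    ∀ x ∈ Λ, ∃! a : Fin r → Polynomial Fq, x = ∑ i, Amap Fq C (a i) * lam i

/-- The `A`-span of the `lam j`, `j < i`. -/
def spanBelow {r : ℕ} (lam : Fin r → C) (i : Fin r) : Set C :=
  {y | ∃ a : Fin r → Polynomial Fq,
    y = ∑ j ∈ Finset.univ.filter (fun j => j < i), Amap Fq C (a j) * lam j}

/-- `lam` is a successive minimum basis (SMB) of `Λ`: each `lam i` lies in `Λ` outside the
`A`-span of the previous ones and has minimal absolute value among such elements. -/
def IsSMB {r : ℕ} (Λ : Set C) (lam : Fin r → C) : Prop :=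
  ∀ i : Fin r, lam i ∈ Λ ∧ lam i ∉ spanBelow Fq C lam i ∧
    ∀ x ∈ Λ, x ∉ spanBelow Fq C lam i → ‖lam i‖ ≤ ‖x‖

/-- The exponential function `e_Λ(z) = z ∏'_{0 ≠ μ ∈ Λ} (1 - z/μ)` of a lattice `Λ`. -/
def latticeExp (Λ : Set C) (z : C) : C :=
  z * ∏' μ : {x : C // x ∈ Λ ∧ x ≠ 0}, (1 - z / (μ : C))

/-- `Λ` is the period lattice of the rank-`r` Drinfeld module `φ` over `L` with
`φ_T(X) = TX + g 1 · X^q + ⋯ + g r · X^{q^r}`:  it is a rank-`r` lattice whose exponential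
function satisfies `e_Λ(Tz) = T e_Λ(z) + ∑ g i e_Λ(z)^{q^i}`. -/
def IsPeriodLattice (Λ : Set C) (r : ℕ) (g : ℕ → C) : Prop :=
  IsLattice Fq C Λ r ∧ ∀ z : C,
    latticeExp C Λ (TC Fq C * z) =
      TC Fq C * latticeExp C Λ z +
        ∑ i ∈ Finset.range r, g (i + 1) * latticeExp C Λ z ^ Fintype.card Fq ^ (i + 1)

/-! ## Subfields of `C`, ramification index and residue class degree -/

/-- `K∞` as a subfield of `C`. -/
def KinfSub : Subfield C := (algebraMap (Kinf Fq) C).fieldRange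

variable {C} in
/-- The subfield of `C` generated by a subfield `E` together with a set `S`. -/
def adjoinSet (E : Subfield C) (S : Set C) : Subfield C := Subfield.closure (↑E ∪ S)

variable {C} in
theorem le_adjoinSet (E : Subfield C) (S : Set C) : E ≤ adjoinSet E S :=
  fun _ hx => Subfield.subset_closure (Or.inl hx)

variable {C} in
/-- The algebra structure on an extension of subfields of `C`. -/
def algOfLE {E E' : Subfield C} (h : E ≤ E') : Algebra E E' :=
  (Subfield.inclusion h).toAlgebra

variable {C} in
/-- `E'` is a finite extension of `E`. -/
def IsFiniteExt {E E' : Subfield C} (h : E ≤ E') : Prop :=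
  letI := algOfLE h
  FiniteDimensional E E'

variable {C} in
/-- The degree `[E' : E]` of an extension of subfields of `C`. -/
def fieldDeg {E E' : Subfield C} (h : E ≤ E') : ℕ :=
  letI := algOfLE h
  Module.finrank E E'

variable {C} in
/-- `E'/E` is a Galois extension. -/
def IsGaloisExt {E E' : Subfield C} (h : E ≤ E') : Prop :=
  letI := algOfLE h
  IsGalois E E'

variable {C} in
/-- The order of the Galois group (= group of `E`-algebra automorphisms) of `E'/E`. -/
def galCard {E E' : Subfield C} (h : E ≤ E') : ℕ :=
  letI := algOfLE h
  Nat.card (E' ≃ₐ[E] E')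

variable {C} in
/-- The Galois group of `E'/E` is abelian. -/
def GalAbelian {E E' : Subfield C} (h : E ≤ E') : Prop :=
  letI := algOfLE h
  ∀ σ τ : E' ≃ₐ[E] E', σ * τ = τ * σ

variable {C} in
/-- Every element of the Galois group of `E'/E` has order dividing `n`. -/
def GalExponentDvd {E E' : Subfield C} (h : E ≤ E') (n : ℕ) : Prop :=
  letI := algOfLE h
  ∀ σ : E' ≃ₐ[E] E', σ ^ n = 1

variable {C} in
/-- The Galois group of `E'/E` is cyclic. -/
def GalCyclic {E E' : Subfield C} (h : E ≤ E') : Prop :=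
  letI := algOfLE h
  IsCyclic (E' ≃ₐ[E] E')

/-- The value group `|Eˣ| ⊆ ℝˣ` of a subfield of `C`. -/
def valueGroup (E : Subfield C) : Subgroup ℝˣ :=
  Subgroup.closure {u : ℝˣ | ∃ x : E, x ≠ 0 ∧ (u : ℝ) = ‖(x : C)‖}

/-- The ramification index `e(E'|E)`: the index of the value group of `E` in that
of `E'`. -/
def ramIndex (E E' : Subfield C) : ℕ :=
  (valueGroup C E).relIndex (valueGroup C E')

/-- The valuation ring `O_E = {x ∈ E : |x| ≤ 1}` of a subfield `E` of `C`. -/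
def integers (E : Subfield C) : Subring E where
  carrier := {x | ‖(x : C)‖ ≤ 1}
  one_mem' := by simp
  mul_mem' := by
    intro a b ha hb
    simp only [Set.mem_setOf_eq] at *
    push_cast
    rw [norm_mul]
    exact mul_le_one₀ ha (norm_nonneg _) hb
  zero_mem' := by simp
  add_mem' := by
    intro a b ha hb
    simp only [Set.mem_setOf_eq] at *
    push_cast
    exact le_trans (IsUltrametricDist.norm_add_le_max _ _) (max_le ha hb)
  neg_mem' := by
    intro a ha
    simpa using ha

/-- The maximal ideal `m_E = {x ∈ E : |x| < 1}` of the valuation ring of `E`. -/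
def maxIdeal (E : Subfield C) : Ideal (integers C E) where
  carrier := {x | ‖((x : E) : C)‖ < 1}
  zero_mem' := by simp
  add_mem' := by
    intro a b ha hb
    simp only [Set.mem_setOf_eq] at *
    push_cast
    exact lt_of_le_of_lt (IsUltrametricDist.norm_add_le_max _ _) (max_lt ha hb)
  smul_mem' := by
    intro c x hx
    simp only [Set.mem_setOf_eq, smul_eq_mul] at *
    push_cast
    rw [norm_mul]
    calc ‖((c : E) : C)‖ * ‖((x : E) : C)‖ ≤ 1 * ‖((x : E) : C)‖ :=
          mul_le_mul_of_nonneg_right c.2 (norm_nonneg _)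
      _ < 1 := by simpa using hx

/-- The residue field `k_E = O_E / m_E` of a subfield `E` of `C`. -/
def residueField (E : Subfield C) : Type _ := (integers C E) ⧸ (maxIdeal C E)

instance (E : Subfield C) : CommRing (residueField C E) := Ideal.Quotient.commRing _

variable {C} in
/-- The map of valuation rings induced by an inclusion of subfields of `C`. -/
def integersMap {E E' : Subfield C} (h : E ≤ E') : integers C E →+* integers C E' :=
  ((Subfield.inclusion h).comp (integers C E).subtype).codRestrict (integers C E')
    (fun x => x.2)

variable {C} in
/-- The map of residue fields induced by an inclusion of subfields of `C`. -/
def residueMap {E E' : Subfield C} (h : E ≤ E') :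
    residueField C E →+* residueField C E' :=
  Ideal.Quotient.lift (maxIdeal C E)
    ((Ideal.Quotient.mk (maxIdeal C E')).comp (integersMap h))
    (fun a ha => by
      show Ideal.Quotient.mk (maxIdeal C E') ((integersMap h) a) = 0
      rw [Ideal.Quotient.eq_zero_iff_mem]
      exact ha)

variable {C} in
/-- The residue class degree `f(E'|E) = [k_{E'} : k_E]`. -/
def resDeg {E E' : Subfield C} (h : E ≤ E') : ℕ :=
  letI := (residueMap h).toAlgebra
  Module.finrank (residueField C E) (residueField C E')


/-
Under the hypothesis on `λ`, the factor `1 - λ/μ` of `e_{Λ'}(λ)` has absolute value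
`max 1 (|λ|/|μ|)`, which is `1` except for the finitely many `μ` with `|μ| < |λ|`. Since
`|λ/μ| → 0` along the discrete lattice, the product converges in the complete ultrametric field
`C`, and the multiplicative norm passes through the convergent infinite product.
-/

open Filter Topology

theorem norm_mul_sub_one_le {R : Type*} [NormedRing R] [NormOneClass R] [IsUltrametricDist R]
    {a b : R} {δ : ℝ} (hδ : δ ≤ 1) (ha : ‖a - 1‖ ≤ δ) (hb : ‖b - 1‖ ≤ δ) :
    ‖a * b - 1‖ ≤ δ := by
  have hb1 : ‖b‖ ≤ 1 := by
    simpa using (IsUltrametricDist.norm_add_le_max (b - 1) 1).trans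
      (max_le (hb.trans hδ) norm_one.le)
  calc ‖a * b - 1‖ = ‖(a - 1) * b + (b - 1)‖ := by rw [sub_mul, one_mul, sub_add_sub_cancel]
    _ ≤ max ‖(a - 1) * b‖ ‖b - 1‖ := IsUltrametricDist.norm_add_le_max _ _
    _ ≤ δ := max_le ((norm_mul_le _ _).trans (by nlinarith [norm_nonneg (a - 1)])) hb

section Ultrametric

variable {ι R : Type*} [NormedCommRing R] [NormOneClass R] [IsUltrametricDist R]

theorem norm_prod_sub_one_le {s : Finset ι} {f : ι → R} {δ : ℝ} (hδ₀ : 0 ≤ δ) (hδ : δ ≤ 1)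
    (hf : ∀ i ∈ s, ‖f i - 1‖ ≤ δ) : ‖∏ i ∈ s, f i - 1‖ ≤ δ :=
  Finset.prod_induction f (fun x => ‖x - 1‖ ≤ δ) (fun _ _ => norm_mul_sub_one_le hδ)
    (by simpa using hδ₀) hf

theorem norm_prod_le_one {s : Finset ι} {f : ι → R} (hf : ∀ i ∈ s, ‖f i - 1‖ ≤ 1) :
    ‖∏ i ∈ s, f i‖ ≤ 1 := by
  simpa using (IsUltrametricDist.norm_add_le_max (∏ i ∈ s, f i - 1) 1).trans
    (max_le (norm_prod_sub_one_le zero_le_one le_rfl hf) norm_one.le)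

theorem multipliable_of_tendsto_cofinite_one [CompleteSpace R] {f : ι → R}
    (hf : Tendsto f cofinite (𝓝 1)) : Multipliable f := by
  classical
  have hfin : ∀ δ > 0, {i | δ ≤ ‖f i - 1‖}.Finite := fun δ hδ => by
    simpa [dist_eq_norm] using (Metric.tendsto_nhds.mp hf) δ hδ
  have hout : ∀ {η} (hη : 0 < η) {s : Finset ι},
      ∀ i ∈ s \ (hfin η hη).toFinset, ‖f i - 1‖ ≤ η := fun hη _ i hi =>
    (not_le.mp fun h => (Finset.mem_sdiff.mp hi).2 ((hfin _ hη).mem_toFinset.mpr h)).le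
  refine CompleteSpace.complete (Metric.cauchySeq_iff'.mpr fun ε hε => ?_)
  -- Beyond `N`, enlarging a partial product multiplies it by a factor within `δ` of `1`, and
  -- the partial product over `N` is at most `M` because its factors outside `hfin 1` have
  -- norm `≤ 1`.
  set M := ‖∏ i ∈ (hfin 1 one_pos).toFinset, f i‖
  set δ := min 1 (ε / (M + 1))
  have hδ : 0 < δ := lt_min one_pos (by positivity)
  set N := (hfin δ hδ).toFinset
  have hM : ‖∏ i ∈ N, f i‖ ≤ M := by
    have hsub : (hfin 1 one_pos).toFinset ⊆ N := fun i hi => (hfin δ hδ).mem_toFinset.mpr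
      (show δ ≤ ‖f i - 1‖ from (min_le_left _ _).trans ((hfin 1 one_pos).mem_toFinset.mp hi))
    rw [← Finset.prod_sdiff hsub]
    exact (norm_mul_le _ _).trans
      (mul_le_of_le_one_left (norm_nonneg _) (norm_prod_le_one (hout one_pos)))
  refine ⟨N, fun t ht => ?_⟩
  have hsmall : ‖∏ i ∈ t \ N, f i - 1‖ ≤ δ :=
    norm_prod_sub_one_le hδ.le (min_le_left _ _) (hout hδ)
  calc dist (∏ i ∈ t, f i) (∏ i ∈ N, f i)
      = ‖(∏ i ∈ t \ N, f i - 1) * ∏ i ∈ N, f i‖ := by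
        rw [dist_eq_norm, ← Finset.prod_sdiff ht]; ring_nf
    _ ≤ δ * M := (norm_mul_le _ _).trans (mul_le_mul hsmall hM (norm_nonneg _) hδ.le)
    _ ≤ ε / (M + 1) * M := by gcongr; exact min_le_right _ _
    _ < ε := by
        rw [div_mul_eq_mul_div, div_lt_iff₀ (by positivity)]
        nlinarith

end Ultrametric

section LatticeExp

variable {F : Type*} [NormedField F] {Λ : Set F}

theorem tendsto_inv_cofinite_zero_of_discrete
    (hΛ : ∀ B : ℝ, {x | x ∈ Λ ∧ ‖x‖ ≤ B}.Finite) :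
    Tendsto (fun μ : {x : F // x ∈ Λ ∧ x ≠ 0} => (μ : F)⁻¹) cofinite (𝓝 0) := by
  refine Metric.tendsto_nhds.mpr fun ε hε => eventually_cofinite.mpr ?_
  refine ((hΛ ε⁻¹).preimage Subtype.val_injective.injOn).subset fun μ hμ => ⟨μ.2.1, ?_⟩
  simp only [Set.mem_ofPred_eq, dist_zero_right, norm_inv, not_lt] at hμ
  exact (le_inv_comm₀ hε (norm_pos_iff.mpr μ.2.2)).mp hμ

theorem norm_one_sub_div_of_norm_sub_eq_max {lam μ : F} (hμ : μ ≠ 0)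
    (hmax : ‖lam - μ‖ = max ‖lam‖ ‖μ‖) : ‖1 - lam / μ‖ = max 1 (‖lam‖ / ‖μ‖) := by
  have hμ' : 0 < ‖μ‖ := norm_pos_iff.mpr hμ
  rw [one_sub_div hμ, norm_div, norm_sub_rev, hmax, ← max_div_div_right hμ'.le,
    div_self hμ'.ne', max_comm]

variable [IsUltrametricDist F] [CompleteSpace F]

theorem norm_latticeExp (hΛ : ∀ B : ℝ, {x | x ∈ Λ ∧ ‖x‖ ≤ B}.Finite) {lam : F}
    (hmax : ∀ μ ∈ Λ, μ ≠ 0 → ‖lam - μ‖ = max ‖lam‖ ‖μ‖) :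
    ‖latticeExp F Λ lam‖ =
      ‖lam‖ * ∏ᶠ μ ∈ {μ | μ ∈ Λ ∧ μ ≠ 0 ∧ ‖μ‖ ≤ ‖lam‖}, (‖lam‖ / ‖μ‖) := by
  have hmult : Multipliable fun μ : {x : F // x ∈ Λ ∧ x ≠ 0} => 1 - lam / μ := by
    refine multipliable_of_tendsto_cofinite_one ?_
    simpa [div_eq_mul_inv] using
      ((tendsto_inv_cofinite_zero_of_discrete hΛ).const_mul lam).const_sub 1
  set g : F → ℝ := fun μ => max 1 (‖lam‖ / ‖μ‖)
  have hg : ∀ μ ∈ Function.mulSupport g, μ ≠ 0 ∧ ‖μ‖ ≤ ‖lam‖ := by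
    intro μ hμ
    have h1 : 1 < ‖lam‖ / ‖μ‖ := not_le.mp fun h => hμ (max_eq_left h)
    have hμ0 : μ ≠ 0 := by rintro rfl; norm_num at h1
    exact ⟨hμ0, ((one_lt_div (norm_pos_iff.mpr hμ0)).mp h1).le⟩
  have hsupp : Function.HasFiniteMulSupport fun μ : {x : F // x ∈ Λ ∧ x ≠ 0} => g μ :=
    ((hΛ ‖lam‖).preimage Subtype.val_injective.injOn).subset fun μ hμ => ⟨μ.2.1, (hg μ hμ).2⟩
  rw [latticeExp, norm_mul, hmult.norm_tprod]
  congr 1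
  calc ∏' μ : {x : F // x ∈ Λ ∧ x ≠ 0}, ‖1 - lam / μ‖
      = ∏' μ : {x : F // x ∈ Λ ∧ x ≠ 0}, g μ :=
        tprod_congr fun μ => norm_one_sub_div_of_norm_sub_eq_max μ.2.2 (hmax μ μ.2.1 μ.2.2)
    _ = ∏ᶠ μ ∈ {μ | μ ∈ Λ ∧ μ ≠ 0}, g μ := by
        rw [tprod_eq_finprod hsupp, finprod_subtype_eq_finprod_cond]
        rfl
    _ = ∏ᶠ μ ∈ {μ | μ ∈ Λ ∧ μ ≠ 0 ∧ ‖μ‖ ≤ ‖lam‖}, g μ :=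
        finprod_mem_inter_mulSupport_eq' _ _ _ fun μ hμ => by simp [hg μ hμ]
    _ = _ := finprod_mem_congr rfl fun μ hμ =>
        max_eq_right ((one_le_div₀ (norm_pos_iff.mpr hμ.2.1)).mpr hμ.2.2)

end LatticeExp

theorem latticeExp_norm_formula
    (r : ℕ) (Λ' : Set C) (hΛ : IsLattice Fq C Λ' r)
    (lam : C) (hlam : lam ∉ Λ')
    (hmax : ∀ μ ∈ Λ', μ ≠ 0 → ‖lam - μ‖ = max ‖lam‖ ‖μ‖) :
    {μ | μ ∈ Λ' ∧ μ ≠ 0 ∧ ‖μ‖ ≤ ‖lam‖}.Finite ∧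
    ‖latticeExp C Λ' lam‖ =
      ‖lam‖ * ∏ᶠ μ ∈ {μ | μ ∈ Λ' ∧ μ ≠ 0 ∧ ‖μ‖ ≤ ‖lam‖}, (‖lam‖ / ‖μ‖) ∧
    latticeExp C Λ' lam ≠ 0 ∧
    (∀ lam' : C, lam' ∉ Λ' → (∀ μ ∈ Λ', μ ≠ 0 → ‖lam' - μ‖ = max ‖lam'‖ ‖μ‖) →
      ‖lam'‖ = ‖lam‖ → ‖latticeExp C Λ' lam'‖ = ‖latticeExp C Λ' lam‖) := by
  have hlam0 : lam ≠ 0 := fun h => hlam (h ▸ hΛ.zero_mem)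
  have hprod : 1 ≤ ∏ᶠ μ ∈ {μ | μ ∈ Λ' ∧ μ ≠ 0 ∧ ‖μ‖ ≤ ‖lam‖}, (‖lam‖ / ‖μ‖) :=
    one_le_finprod fun μ => one_le_finprod fun hμ =>
      (one_le_div₀ (norm_pos_iff.mpr hμ.2.1)).mpr hμ.2.2
  refine ⟨(hΛ.discrete ‖lam‖).subset fun μ hμ => ⟨hμ.1, hμ.2.2⟩,
    norm_latticeExp hΛ.discrete hmax, ?_, fun lam' _ hmax' hnorm => ?_⟩
  · rw [← norm_pos_iff, norm_latticeExp hΛ.discrete hmax]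
    exact mul_pos (norm_pos_iff.mpr hlam0) (zero_lt_one.trans_le hprod)
  · rw [norm_latticeExp hΛ.discrete hmax', norm_latticeExp hΛ.discrete hmax, hnorm]

end DrinfeldPeriods
end
end

section
/- Let Λ be an A-lattice of rank r in C and let λ_1, …, λ_r be chosen successively so that for each i, λ_i has minimal absolute value among the elements of Λ ∖ (Aλ_1 + ⋯ + Aλ_{i−1}). Then λ_1, …, λ_r is an A-basis of Λ, and it is orthogonal: for all a_1, …, a_r ∈ K∞, |a_1λ_1 + ⋯ + a_rλ_r| = max_{1≤i≤r} |a_i|·|λ_i|. -/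
open Polynomial

set_option linter.unusedSectionVars false
set_option synthInstance.maxHeartbeats 400000
set_option maxHeartbeats 1000000

noncomputable section

namespace DrinfeldPeriods

/-! ## The basic setting

`Fq` is the finite field with `q` elements, `Kinf Fq = F_q((T⁻¹))` is the field of formal
Laurent series in `T⁻¹` (realized as Laurent series in a variable `X` with `T := X⁻¹`),
and `C` is a complete algebraically closed nonarchimedean normed field whose norm extends
the absolute value of `K∞` normalized by `|T| = q`.  (The completed algebraic closure of
`K∞` is such a field.) -/

variable (Fq : Type*) [Field Fq] [Fintype Fq]

variable (C : Type*) [NormedField C] [IsUltrametricDist C] [CompleteSpace C] [IsAlgClosed C]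
  [Algebra (Kinf Fq) C]

/-! The absolute value of a nonzero `a ∈ A` is `q ^ deg a`. Suppose `|∑ aⱼλⱼ| < M := max |aⱼ||λⱼ|`
for some `aⱼ ∈ A`, let `i` be the last index with `|aᵢ||λᵢ| = M` and `d = deg aᵢ`. The leading
terms of the maximal summands give `w = ∑ lc(aⱼ) T^(deg aⱼ - d) λⱼ ∈ Λ ∖ (Aλ₁ + ⋯ + Aλᵢ₋₁)` with
`|T^d w| < M = q^d |λᵢ|`, contradicting the minimality of `λᵢ`. So the `λⱼ` are orthogonal over
`A`, hence `A`-independent. They span `Λ`: any `x ∈ Λ` satisfies an `A`-relation with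
`λ₁, …, λᵣ` because `Λ` has rank `r`, i.e. `p x = ∑ cⱼλⱼ` for some `p ≠ 0`. If `x ∉ ∑ Aλⱼ`,
reducing the `cⱼ` modulo `p` gives `x' ∈ (x + ∑ Aλⱼ) ∩ Λ` with `p x' = ∑ (cⱼ mod p) λⱼ`, so `x'`
is shorter than some `λⱼ` although it lies outside `∑ Aλⱼ`. Finally, `⋃ₙ T⁻ⁿA` is dense in `K∞` and both sides of the orthogonality identity are
continuous in the coefficients. -/

open scoped NNReal

theorem nnnorm_sum_lt_of_forall_lt {ι E : Type*} [SeminormedAddCommGroup E] [IsUltrametricDist E]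
    {s : Finset ι} {f : ι → E} {M : ℝ≥0} (hM : 0 < M) (h : ∀ i ∈ s, ‖f i‖₊ < M) :
    ‖∑ i ∈ s, f i‖₊ < M :=
  (Finset.nnnorm_sum_le_sup_nnnorm s f).trans_lt ((Finset.sup_lt_iff hM).2 h)

theorem isClosed_setOf_nnnorm_sum_mul_eq_sup {ι R : Type*} [Fintype ι] [SeminormedRing R]
    (v : ι → R) :
    IsClosed {c : ι → R | ‖∑ i, c i * v i‖₊ = Finset.univ.sup fun i => ‖c i‖₊ * ‖v i‖₊} :=
  isClosed_eq (by fun_prop) (by fun_prop)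

theorem nnnorm_sum_mul_le_sup {ι R : Type*} [Fintype ι] [SeminormedRing R] [IsUltrametricDist R]
    (c v : ι → R) :
    ‖∑ i, c i * v i‖₊ ≤ Finset.univ.sup fun i => ‖c i‖₊ * ‖v i‖₊ :=
  (Finset.nnnorm_sum_le_sup_nnnorm _ _).trans
    (Finset.sup_mono_fun fun i _ => nnnorm_mul_le (c i) (v i))

theorem exists_greatest_eq_sup {ι α : Type*} [Fintype ι] [LinearOrder ι] [LinearOrder α]
    [OrderBot α] (f : ι → α) (h : ⊥ < Finset.univ.sup f) :
    ∃ i, f i = Finset.univ.sup f ∧ ∀ j, f j = Finset.univ.sup f → j ≤ i := by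
  obtain ⟨k, -, -⟩ := Finset.lt_sup_iff.1 h
  obtain ⟨i, -, hi⟩ := Finset.exists_mem_eq_sup Finset.univ ⟨k, Finset.mem_univ k⟩ f
  set I := Finset.univ.filter fun j => f j = Finset.univ.sup f
  have hI : I.Nonempty := ⟨i, by simp [I, hi]⟩
  exact ⟨I.max' hI, (Finset.mem_filter.1 (I.max'_mem hI)).2,
    fun j hj => I.le_max' j (by simp [I, hj])⟩

theorem sub_X_pow_mul_C_leadingCoeff_mul_X_pow {R : Type*} [CommRing R] {p : R[X]} {d : ℕ}
    (hd : d ≤ p.natDegree) :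
    p - X ^ d * (Polynomial.C p.leadingCoeff * X ^ (p.natDegree - d)) = p.eraseLead := by
  rw [mul_left_comm, ← pow_add, Nat.add_sub_cancel' hd]
  linear_combination -p.eraseLead_add_C_mul_X_pow

section

variable {Fq}
omit [Fintype Fq]

theorem C_mul_Tinf_pow (c : Fq) (n : ℕ) :
    HahnSeries.C c * Tinf Fq ^ n = HahnSeries.single (-(n : ℤ)) c := by
  rw [Tinf, HahnSeries.single_pow, HahnSeries.C_apply, HahnSeries.single_mul_single]
  simp

theorem exists_coeff_sub_eval₂_Tinf_eq_zero (z : Kinf Fq) :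
    ∃ P : Polynomial Fq, ∀ j < 1, (z - P.eval₂ HahnSeries.C (Tinf Fq)).coeff j = 0 := by
  suffices h : ∀ (n : ℕ) (z : Kinf Fq), (∀ j : ℤ, j < 1 - n → z.coeff j = 0) →
      ∃ P : Polynomial Fq, ∀ j < 1, (z - P.eval₂ HahnSeries.C (Tinf Fq)).coeff j = 0 from
    h (1 - z.order).toNat z fun j hj => HahnSeries.coeff_eq_zero_of_lt_order (by omega)
  intro n
  induction n with
  | zero => exact fun z hz => ⟨0, by simpa using hz⟩
  | succ n ih =>
    intro z hz
    obtain ⟨P, hP⟩ := ih (z - HahnSeries.single (-(n : ℤ)) (z.coeff (-n))) fun j hj => by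
      rcases eq_or_ne j (-n) with rfl | hjn
      · simp
      · simp [HahnSeries.coeff_single_of_ne hjn, hz j (by omega)]
    refine ⟨P + Polynomial.C (z.coeff (-n)) * X ^ n, fun j hj => ?_⟩
    rw [eval₂_add, eval₂_mul, eval₂_C, eval₂_X_pow, C_mul_Tinf_pow, sub_add_eq_sub_sub_swap]
    exact hP j hj

end

section

variable {Fq C}
omit [Fintype Fq] [IsUltrametricDist C] [CompleteSpace C] [IsAlgClosed C]
variable {r : ℕ} {Λ : Set C} {lam : Fin r → C}

theorem mem_spanBelow_iff {y : C} {i : Fin r} :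
    y ∈ spanBelow Fq C lam i ↔ ∃ a : Fin r → Polynomial Fq,
      (∀ j, i ≤ j → a j = 0) ∧ y = ∑ j, Amap Fq C (a j) * lam j := by
  constructor
  · rintro ⟨a, rfl⟩
    refine ⟨fun j => if j < i then a j else 0, fun j hj => if_neg hj.not_gt, ?_⟩
    rw [Finset.sum_filter]
    exact Finset.sum_congr rfl fun j _ => by by_cases h : j < i <;> simp [h]
  · rintro ⟨a, ha, rfl⟩
    refine ⟨a, (Finset.sum_filter_of_ne fun j _ h => not_le.1 fun hj => h ?_).symm⟩
    rw [ha j hj, map_zero, zero_mul]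

theorem spanBelow_mono {i j : Fin r} (hij : i ≤ j) :
    spanBelow Fq C lam i ⊆ spanBelow Fq C lam j := fun _ hy =>
  let ⟨a, ha, hy⟩ := mem_spanBelow_iff.1 hy
  mem_spanBelow_iff.2 ⟨a, fun k hk => ha k (hij.trans hk), hy⟩

theorem IsLattice.sum_mul_mem (hΛ : IsLattice Fq C Λ r) {ι : Type*} (s : Finset ι)
    (a : ι → Polynomial Fq) {v : ι → C} (hv : ∀ j, v j ∈ Λ) :
    ∑ j ∈ s, Amap Fq C (a j) * v j ∈ Λ :=
  Finset.sum_induction _ (· ∈ Λ) (fun x y hx hy => hΛ.add_mem x hx y hy) hΛ.zero_mem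
    fun j _ => hΛ.smul_mem _ _ (hv j)

theorem IsSMB.nnnorm_le (hlam : IsSMB Fq C Λ lam) (i : Fin r) {x : C} (hx : x ∈ Λ)
    (hxi : x ∉ spanBelow Fq C lam i) : ‖lam i‖₊ ≤ ‖x‖₊ :=
  (hlam i).2.2 x hx hxi

theorem IsSMB.ne_zero (hlam : IsSMB Fq C Λ lam) (i : Fin r) : lam i ≠ 0 := fun h =>
  (hlam i).2.1 ⟨0, by simp [h]⟩

theorem IsSMB.nnnorm_pos (hlam : IsSMB Fq C Λ lam) (i : Fin r) : 0 < ‖lam i‖₊ :=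
  _root_.nnnorm_pos.2 (hlam.ne_zero i)

theorem IsSMB.nnnorm_le_of_le (hlam : IsSMB Fq C Λ lam) {i j : Fin r} (hij : i ≤ j) :
    ‖lam i‖₊ ≤ ‖lam j‖₊ :=
  hlam.nnnorm_le i (hlam j).1 fun h => (hlam j).2.1 (spanBelow_mono hij h)

theorem IsSMB.sum_not_mem_spanBelow (hlam : IsSMB Fq C Λ lam) {i : Fin r}
    {b : Fin r → Polynomial Fq} {c : Fq} (hc : c ≠ 0) (hbi : b i = Polynomial.C c)
    (hb : ∀ j, i < j → b j = 0) : ∑ j, Amap Fq C (b j) * lam j ∉ spanBelow Fq C lam i := by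
  rintro hmem
  obtain ⟨a, ha, hab⟩ := mem_spanBelow_iff.1 hmem
  set e : Fin r → Polynomial Fq :=
    fun j => Polynomial.C c⁻¹ * (a j - b j) + (Pi.single i 1 : Fin r → Polynomial Fq) j
  apply (hlam i).2.1
  refine mem_spanBelow_iff.2 ⟨e, fun j hj => ?_, ?_⟩
  · rcases hj.eq_or_lt with rfl | hj
    · simp only [e, ha i le_rfl, hbi, Pi.single_eq_same, zero_sub, mul_neg, ← Polynomial.C_mul,
        inv_mul_cancel₀ hc, Polynomial.C_1, neg_add_cancel]
    · simp [e, ha j hj.le, hb j hj, hj.ne']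
  · have hsingle : ∑ j, Amap Fq C ((Pi.single i 1 : Fin r → Polynomial Fq) j) * lam j = lam i :=
      (Fintype.sum_eq_single i fun j hj => by rw [Pi.single_eq_of_ne hj, map_zero, zero_mul]).trans
        (by rw [Pi.single_eq_same, map_one, one_mul])
    simp only [e, map_add, add_mul, Finset.sum_add_distrib, hsingle, map_mul, mul_assoc,
      ← Finset.mul_sum, map_sub, sub_mul, Finset.sum_sub_distrib, ← hab, sub_self, mul_zero,
      zero_add]

theorem IsLattice.exists_sum_eq_zero (hΛ : IsLattice Fq C Λ r) {n : ℕ} (hn : r < n)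
    (Y : Fin n → C) (hY : ∀ k, Y k ∈ Λ) :
    ∃ g : Fin n → Polynomial Fq, g ≠ 0 ∧ ∑ k, Amap Fq C (g k) * Y k = 0 := by
  obtain ⟨b, -, hb⟩ := hΛ.free
  choose c hc using fun k => (hb (Y k) (hY k)).exists
  have hdep : ¬ LinearIndependent (Polynomial Fq) c := fun h => by
    have := h.fintype_card_le_finrank
    simp only [Fintype.card_fin, Module.finrank_fin_fun] at this
    omega
  obtain ⟨g, hg, k, hk⟩ := Fintype.not_linearIndependent_iff.1 hdep
  refine ⟨g, fun h => hk (by simp [h]), ?_⟩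
  calc ∑ k, Amap Fq C (g k) * Y k
      = ∑ m, Amap Fq C (∑ k, g k * c k m) * b m := by
        simp only [hc, Finset.mul_sum, map_sum, Finset.sum_mul, map_mul, mul_assoc]
        exact Finset.sum_comm
    _ = 0 := Finset.sum_eq_zero fun m _ => by
        have hgm := congrFun hg m
        simp only [Finset.sum_apply, Pi.smul_apply, smul_eq_mul, Pi.zero_apply] at hgm
        rw [hgm, map_zero, zero_mul]

end

section

variable {Fq C}
omit [IsUltrametricDist C] [CompleteSpace C] [IsAlgClosed C]

theorem one_lt_card : (1 : ℝ≥0) < Fintype.card Fq := by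
  exact_mod_cast Fintype.one_lt_card

theorem nnnorm_algebraMap (hnorm : NormExtends Fq C) {x : Kinf Fq} (hx : x ≠ 0) :
    ‖algebraMap (Kinf Fq) C x‖₊ = (Fintype.card Fq : ℝ≥0) ^ (-x.order) := by
  ext
  simp [hnorm x hx]

theorem nnnorm_TC (hnorm : NormExtends Fq C) : ‖TC Fq C‖₊ = Fintype.card Fq := by
  rw [TC, Tinf, nnnorm_algebraMap hnorm (HahnSeries.single_ne_zero one_ne_zero),
    HahnSeries.order_single one_ne_zero, neg_neg, zpow_one]

theorem nnnorm_FqC (hnorm : NormExtends Fq C) {c : Fq} (hc : c ≠ 0) : ‖FqC Fq C c‖₊ = 1 := by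
  rw [FqC, RingHom.comp_apply, nnnorm_algebraMap hnorm (HahnSeries.C_ne_zero hc),
    HahnSeries.order_C, neg_zero, zpow_zero]

theorem nnnorm_FqC_le (hnorm : NormExtends Fq C) (c : Fq) : ‖FqC Fq C c‖₊ ≤ 1 := by
  rcases eq_or_ne c 0 with rfl | hc
  · simp
  · exact (nnnorm_FqC hnorm hc).le

theorem nnnorm_algebraMap_lt_one (hnorm : NormExtends Fq C) {y : Kinf Fq}
    (hy : ∀ j < 1, y.coeff j = 0) : ‖algebraMap (Kinf Fq) C y‖₊ < 1 := by
  rcases eq_or_ne y 0 with rfl | hy0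
  · simp
  have hord : 1 ≤ y.order := not_lt.1 fun h => hy0 (HahnSeries.coeff_order_eq_zero.1 (hy _ h))
  rw [nnnorm_algebraMap hnorm hy0]
  exact zpow_lt_one_of_neg₀ one_lt_card (by omega)

theorem exists_nnnorm_algebraMap_sub_Amap_lt_one (hnorm : NormExtends Fq C) (z : Kinf Fq) :
    ∃ P : Polynomial Fq, ‖algebraMap (Kinf Fq) C z - Amap Fq C P‖₊ < 1 := by
  obtain ⟨P, hP⟩ := exists_coeff_sub_eval₂_Tinf_eq_zero z
  have hP' : algebraMap (Kinf Fq) C (P.eval₂ HahnSeries.C (Tinf Fq)) = Amap Fq C P := by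
    rw [hom_eval₂]; rfl
  refine ⟨P, ?_⟩
  rw [← hP', ← map_sub]
  exact nnnorm_algebraMap_lt_one hnorm hP

theorem exists_nnnorm_algebraMap_sub_lt (hnorm : NormExtends Fq C) (z : Kinf Fq) (n : ℕ) :
    ∃ P : Polynomial Fq, ‖algebraMap (Kinf Fq) C z - (TC Fq C ^ n)⁻¹ * Amap Fq C P‖₊ <
      (Fintype.card Fq : ℝ≥0)⁻¹ ^ n := by
  obtain ⟨P, hP⟩ := exists_nnnorm_algebraMap_sub_Amap_lt_one hnorm (Tinf Fq ^ n * z)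
  refine ⟨P, ?_⟩
  have hT : TC Fq C ^ n ≠ 0 := pow_ne_zero n (nnnorm_ne_zero_iff.1 (by
    rw [nnnorm_TC hnorm]; exact (zero_lt_one.trans one_lt_card).ne'))
  have hq : (0 : ℝ≥0) < ((Fintype.card Fq : ℝ≥0) ^ n)⁻¹ := by
    have := zero_lt_one.trans (one_lt_card (Fq := Fq)); positivity
  calc ‖algebraMap (Kinf Fq) C z - (TC Fq C ^ n)⁻¹ * Amap Fq C P‖₊
      = ((Fintype.card Fq : ℝ≥0) ^ n)⁻¹ *
          ‖algebraMap (Kinf Fq) C (Tinf Fq ^ n * z) - Amap Fq C P‖₊ := by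
        rw [map_mul, map_pow, ← TC, ← nnnorm_TC hnorm, ← nnnorm_pow, ← nnnorm_inv, ← nnnorm_mul,
          mul_sub, inv_mul_cancel_left₀ hT]
    _ < (Fintype.card Fq : ℝ≥0)⁻¹ ^ n := by rw [inv_pow]; exact mul_lt_of_lt_one_right hq hP

end

section

variable {Fq C}
omit [CompleteSpace C] [IsAlgClosed C]
variable {r : ℕ} {Λ : Set C} {lam : Fin r → C}

theorem nnnorm_Amap_lt_pow (hnorm : NormExtends Fq C) {a : Polynomial Fq} {n : ℕ}
    (ha : a.degree < n) : ‖Amap Fq C a‖₊ < (Fintype.card Fq : ℝ≥0) ^ n := by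
  have hq := one_lt_card (Fq := Fq)
  have hpos : (0 : ℝ≥0) < (Fintype.card Fq : ℝ≥0) ^ n := pow_pos (zero_lt_one.trans hq) n
  rcases eq_or_ne a 0 with rfl | ha0
  · simpa using hpos
  rw [Amap, coe_eval₂RingHom, eval₂_eq_sum_range' _ ((natDegree_lt_iff_degree_lt ha0).2 ha)]
  refine nnnorm_sum_lt_of_forall_lt hpos fun k hk => ?_
  rw [nnnorm_mul, nnnorm_pow, nnnorm_TC hnorm]
  calc ‖FqC Fq C (a.coeff k)‖₊ * (Fintype.card Fq : ℝ≥0) ^ k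
      ≤ 1 * (Fintype.card Fq : ℝ≥0) ^ k := by gcongr; exact nnnorm_FqC_le hnorm _
    _ < (Fintype.card Fq : ℝ≥0) ^ n := by
      rw [one_mul]; exact pow_lt_pow_right₀ hq (Finset.mem_range.1 hk)

theorem nnnorm_Amap (hnorm : NormExtends Fq C) {a : Polynomial Fq} (ha : a ≠ 0) :
    ‖Amap Fq C a‖₊ = (Fintype.card Fq : ℝ≥0) ^ a.natDegree := by
  have hlead : ‖Amap Fq C (Polynomial.C a.leadingCoeff * X ^ a.natDegree)‖₊ =
      (Fintype.card Fq : ℝ≥0) ^ a.natDegree := by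
    simp [Amap, nnnorm_FqC hnorm (leadingCoeff_ne_zero.2 ha), nnnorm_TC hnorm]
  have htail : ‖Amap Fq C a.eraseLead‖₊ < (Fintype.card Fq : ℝ≥0) ^ a.natDegree :=
    nnnorm_Amap_lt_pow hnorm (degree_eq_natDegree ha ▸ degree_eraseLead_lt ha)
  conv_lhs => rw [← eraseLead_add_C_mul_X_pow a, map_add]
  rw [IsUltrametricDist.nnnorm_add_eq_max_of_nnnorm_ne_nnnorm (hlead ▸ htail.ne), hlead,
    max_eq_right htail.le]

theorem nnnorm_Amap_lt_nnnorm_Amap (hnorm : NormExtends Fq C) {a b : Polynomial Fq}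
    (h : a.degree < b.degree) : ‖Amap Fq C a‖₊ < ‖Amap Fq C b‖₊ := by
  have hb : b ≠ 0 := ne_zero_of_degree_gt h
  rw [nnnorm_Amap hnorm hb]
  exact nnnorm_Amap_lt_pow hnorm (degree_eq_natDegree hb ▸ h)

theorem IsSMB.natDegree_le_of_nnnorm_mul_eq (hlam : IsSMB Fq C Λ lam)
    (hnorm : NormExtends Fq C) {i j : Fin r} (hji : j ≤ i) {a b : Polynomial Fq} (ha : a ≠ 0)
    (hb : b ≠ 0) (h : ‖Amap Fq C a‖₊ * ‖lam i‖₊ = ‖Amap Fq C b‖₊ * ‖lam j‖₊) :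
    a.natDegree ≤ b.natDegree := by
  rw [nnnorm_Amap hnorm ha, nnnorm_Amap hnorm hb] at h
  have hle : (Fintype.card Fq : ℝ≥0) ^ a.natDegree * ‖lam i‖₊ ≤
      (Fintype.card Fq : ℝ≥0) ^ b.natDegree * ‖lam i‖₊ :=
    h.trans_le (mul_le_mul_right (hlam.nnnorm_le_of_le hji) _)
  exact (pow_le_pow_iff_right₀ one_lt_card).1 (le_of_mul_le_mul_right hle (hlam.nnnorm_pos i))

theorem IsSMB.nnnorm_sum_Amap_mul (hlam : IsSMB Fq C Λ lam) (hnorm : NormExtends Fq C)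
    (hΛ : IsLattice Fq C Λ r) (a : Fin r → Polynomial Fq) :
    ‖∑ j, Amap Fq C (a j) * lam j‖₊ =
      Finset.univ.sup fun j => ‖Amap Fq C (a j)‖₊ * ‖lam j‖₊ := by
  set t : Fin r → ℝ≥0 := fun j => ‖Amap Fq C (a j)‖₊ * ‖lam j‖₊
  set M := Finset.univ.sup t
  refine le_antisymm (nnnorm_sum_mul_le_sup _ _) (not_lt.1 fun hlt => ?_)
  have hM : 0 < M := pos_of_gt hlt
  obtain ⟨i, hiM, hi⟩ : ∃ i, t i = M ∧ ∀ j, t j = M → j ≤ i := exists_greatest_eq_sup t hM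
  have ha : ∀ j, t j = M → a j ≠ 0 := fun j hj h0 => hM.ne (by simp [← hj, t, h0])
  set d := (a i).natDegree
  have hd : ∀ j, t j = M → d ≤ (a j).natDegree := fun j hj =>
    hlam.natDegree_le_of_nnnorm_mul_eq hnorm (hi j hj) (ha i hiM) (ha j hj) (hiM.trans hj.symm)
  -- `X ^ d * b j` is the leading term of `a j` when `t j` is maximal
  obtain ⟨b, hb⟩ : ∃ b : Fin r → Polynomial Fq, ∀ j, b j =
      if t j = M then Polynomial.C (a j).leadingCoeff * X ^ ((a j).natDegree - d) else 0 :=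
    ⟨_, fun _ => rfl⟩
  set w := ∑ j, Amap Fq C (b j) * lam j
  have hw : M ≤ ‖Amap Fq C (X ^ d) * w‖₊ := by
    have hwi : ‖lam i‖₊ ≤ ‖w‖₊ :=
      hlam.nnnorm_le i (hΛ.sum_mul_mem Finset.univ b fun j => (hlam j).1) <|
        hlam.sum_not_mem_spanBelow (leadingCoeff_ne_zero.2 (ha i hiM)) (by simp [hb, hiM, d])
          fun j hj => by rw [hb, if_neg fun h => (hi j h).not_gt hj]
    rw [nnnorm_mul, nnnorm_Amap hnorm (pow_ne_zero _ X_ne_zero), natDegree_X_pow, ← hiM]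
    simp only [t, nnnorm_Amap hnorm (ha i hiM)]
    gcongr
  have hrest : ∀ j, ‖Amap Fq C (a j - X ^ d * b j) * lam j‖₊ < M := fun j => by
    rw [nnnorm_mul, hb]
    by_cases hj : t j = M
    · rw [if_pos hj, sub_X_pow_mul_C_leadingCoeff_mul_X_pow (hd j hj), ← hj]
      exact mul_lt_mul_of_pos_right
        (nnnorm_Amap_lt_nnnorm_Amap hnorm (degree_eraseLead_lt (ha j hj))) (hlam.nnnorm_pos j)
    · rw [if_neg hj, mul_zero, sub_zero]
      exact (Finset.le_sup (f := t) (Finset.mem_univ j)).lt_of_ne hj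
  have hsplit : ∑ j, Amap Fq C (a j) * lam j =
      Amap Fq C (X ^ d) * w + ∑ j, Amap Fq C (a j - X ^ d * b j) * lam j := by
    rw [Finset.mul_sum, ← Finset.sum_add_distrib]
    exact Finset.sum_congr rfl fun j _ => by rw [map_sub, map_mul]; ring
  have hR := nnnorm_sum_lt_of_forall_lt (s := Finset.univ) hM fun j _ => hrest j
  refine hlt.not_ge ?_
  rw [hsplit, IsUltrametricDist.nnnorm_add_eq_max_of_nnnorm_ne_nnnorm (hR.trans_le hw).ne']
  exact hw.trans (le_max_left _ _)

theorem Amap_injective (hnorm : NormExtends Fq C) : Function.Injective (Amap Fq C) :=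
  (injective_iff_map_eq_zero _).2 fun a h => by_contra fun ha => by
    have := nnnorm_Amap hnorm ha
    rw [h, nnnorm_zero] at this
    exact (pow_pos (zero_lt_one.trans one_lt_card) _).ne this

theorem IsSMB.eq_of_sum_eq (hlam : IsSMB Fq C Λ lam) (hnorm : NormExtends Fq C)
    (hΛ : IsLattice Fq C Λ r) {a a' : Fin r → Polynomial Fq}
    (h : ∑ j, Amap Fq C (a j) * lam j = ∑ j, Amap Fq C (a' j) * lam j) : a = a' := by
  have hdiff : ∑ j, Amap Fq C ((a - a') j) * lam j = 0 := by
    simp only [Pi.sub_apply, map_sub, sub_mul, Finset.sum_sub_distrib, h, sub_self]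
  have hsup := hlam.nnnorm_sum_Amap_mul hnorm hΛ (a - a')
  rw [hdiff, nnnorm_zero, eq_comm, ← bot_eq_zero, Finset.sup_eq_bot_iff] at hsup
  funext j
  have hj := hsup j (Finset.mem_univ j)
  rw [bot_eq_zero, mul_eq_zero, nnnorm_eq_zero, nnnorm_eq_zero, or_iff_left (hlam.ne_zero j),
    ← map_zero (Amap Fq C)] at hj
  exact sub_eq_zero.1 (Amap_injective hnorm hj)

theorem IsSMB.exists_eq_sum_of_mul_eq_sum (hlam : IsSMB Fq C Λ lam) (hnorm : NormExtends Fq C)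
    (hΛ : IsLattice Fq C Λ r) {x : C} (hx : x ∈ Λ) {p : Polynomial Fq} (hp : p ≠ 0)
    {c : Fin r → Polynomial Fq} (h : Amap Fq C p * x = ∑ k, Amap Fq C (c k) * lam k) :
    ∃ a : Fin r → Polynomial Fq, x = ∑ k, Amap Fq C (a k) * lam k := by
  by_contra hx_not
  set x' := x + ∑ k, Amap Fq C (-(c k / p)) * lam k
  have hx' : x' ∈ Λ := hΛ.add_mem _ hx _ (hΛ.sum_mul_mem _ _ fun k => (hlam k).1)
  have hx'_not : ∀ a : Fin r → Polynomial Fq, x' ≠ ∑ k, Amap Fq C (a k) * lam k := by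
    refine fun a ha => hx_not ⟨fun k => a k + c k / p, ?_⟩
    rw [show x = x' - ∑ k, Amap Fq C (-(c k / p)) * lam k from (add_sub_cancel_right _ _).symm, ha]
    simp only [map_add, map_neg, add_mul, neg_mul, Finset.sum_add_distrib, Finset.sum_neg_distrib]
    ring
  have hmin : ∀ k, ‖lam k‖₊ ≤ ‖x'‖₊ := fun k => hlam.nnnorm_le k hx' fun hk =>
    let ⟨a, _, ha⟩ := mem_spanBelow_iff.1 hk
    hx'_not a ha
  have hpx' : Amap Fq C p * x' = ∑ k, Amap Fq C (c k % p) * lam k := by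
    rw [mul_add, h, Finset.mul_sum, ← Finset.sum_add_distrib]
    refine Finset.sum_congr rfl fun k _ => ?_
    rw [EuclideanDomain.mod_eq_sub_mul_div, map_sub, map_mul, map_neg]
    ring
  have hpos : 0 < ‖Amap Fq C p * x'‖₊ := _root_.nnnorm_pos.2 <|
    mul_ne_zero ((map_ne_zero_iff _ (Amap_injective hnorm)).2 hp) fun h0 => hx'_not 0 (by simp [h0])
  have hlt : ‖∑ k, Amap Fq C (c k % p) * lam k‖₊ < ‖Amap Fq C p * x'‖₊ :=
    nnnorm_sum_lt_of_forall_lt hpos fun k _ => by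
      rw [nnnorm_mul, nnnorm_mul]
      exact (mul_lt_mul_of_pos_right (nnnorm_Amap_lt_nnnorm_Amap hnorm (degree_mod_lt _ hp))
        (hlam.nnnorm_pos k)).trans_le (mul_le_mul_right (hmin k) _)
  exact hlt.ne (by rw [hpx'])

theorem IsSMB.exists_eq_sum (hlam : IsSMB Fq C Λ lam) (hnorm : NormExtends Fq C)
    (hΛ : IsLattice Fq C Λ r) {x : C} (hx : x ∈ Λ) :
    ∃ a : Fin r → Polynomial Fq, x = ∑ k, Amap Fq C (a k) * lam k := by
  obtain ⟨g, hg, hsum⟩ := hΛ.exists_sum_eq_zero r.lt_succ_self (Fin.cons x lam)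
    (Fin.cases hx fun k => (hlam k).1)
  simp only [Fin.sum_univ_succ, Fin.cons_zero, Fin.cons_succ] at hsum
  have hg0 : g 0 ≠ 0 := fun h0 => hg <| by
    have hrel := hlam.eq_of_sum_eq hnorm hΛ (a := fun k => g k.succ) (a' := 0)
      (by simpa [h0] using hsum)
    exact funext fun k => Fin.cases h0 (congrFun hrel) k
  refine hlam.exists_eq_sum_of_mul_eq_sum hnorm hΛ hx hg0 (c := fun k => -g k.succ) ?_
  simp only [map_neg, neg_mul, Finset.sum_neg_distrib]
  exact eq_neg_of_add_eq_zero_left hsum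

theorem IsSMB.nnnorm_sum_algebraMap_mul (hlam : IsSMB Fq C Λ lam) (hnorm : NormExtends Fq C)
    (hΛ : IsLattice Fq C Λ r) (a : Fin r → Kinf Fq) :
    ‖∑ i, algebraMap (Kinf Fq) C (a i) * lam i‖₊ =
      Finset.univ.sup fun i => ‖algebraMap (Kinf Fq) C (a i)‖₊ * ‖lam i‖₊ := by
  choose P hP using fun (n : ℕ) (i : Fin r) => exists_nnnorm_algebraMap_sub_lt hnorm (a i) n
  set β : ℕ → Fin r → C := fun n i => (TC Fq C ^ n)⁻¹ * Amap Fq C (P n i)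
  have hβ : Filter.Tendsto β Filter.atTop (nhds fun i => algebraMap (Kinf Fq) C (a i)) := by
    refine tendsto_pi_nhds.2 fun i => tendsto_iff_norm_sub_tendsto_zero.2 <|
      squeeze_zero (fun _ => norm_nonneg _) (fun n => ?_) <| NNReal.tendsto_coe.2 <|
        NNReal.tendsto_pow_atTop_nhds_zero_of_lt_one
          (inv_lt_one_of_one_lt₀ (one_lt_card (Fq := Fq)))
    rw [norm_sub_rev, ← coe_nnnorm, NNReal.coe_le_coe]
    exact (hP n i).le
  refine (isClosed_setOf_nnnorm_sum_mul_eq_sup lam).mem_of_tendsto hβ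
    (Filter.Eventually.of_forall fun n => ?_)
  simp only [Set.mem_ofPred_eq, β, mul_assoc, ← Finset.mul_sum, nnnorm_mul,
    hlam.nnnorm_sum_Amap_mul hnorm hΛ, NNReal.mul_finset_sup]

end

/-- If `λ_1, …, λ_r` are chosen successively in an `A`-lattice `Λ` of
rank `r` so that each `λ_i` has minimal absolute value among the elements of
`Λ ∖ (Aλ_1 + ⋯ + Aλ_{i−1})`, then `λ_1, …, λ_r` is an `A`-basis of `Λ` and is orthogonal:
`|a_1λ_1 + ⋯ + a_rλ_r| = max_i |a_i||λ_i|` for all `a_i ∈ K∞`. -/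
theorem smb_is_orthogonal_basis
    (hnorm : NormExtends Fq C)
    (r : ℕ) (Λ : Set C) (hΛ : IsLattice Fq C Λ r)
    (lam : Fin r → C) (hlam : IsSMB Fq C Λ lam) :
    IsABasis Fq C Λ lam ∧
    ∀ a : Fin r → Kinf Fq,
      ‖∑ i, algebraMap (Kinf Fq) C (a i) * lam i‖₊ =
        Finset.univ.sup fun i => ‖algebraMap (Kinf Fq) C (a i)‖₊ * ‖lam i‖₊ := by
  refine ⟨⟨fun i => (hlam i).1, fun x hx => ?_⟩, hlam.nnnorm_sum_algebraMap_mul hnorm hΛ⟩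
  obtain ⟨a, rfl⟩ := hlam.exists_eq_sum hnorm hΛ hx
  exact ⟨a, rfl, fun a' h => (hlam.eq_of_sum_eq hnorm hΛ h).symm⟩

end DrinfeldPeriods
end
end
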